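/- Let V be a ℚ-vector space with a symmetric bilinear form of signature (1,n), and let FPℚ be the set of rational points of a connected component of the positive cone. Define for any subset W ⊆ V the dual W^ = {v : v·w > 0 for all w ∈ W}. Then (FPℚ)^ equals the closure cone: the set of v in the closure of FP (intersected with V) , i.e. (FPℚ)^ = closure(FP)ℚ \ {0}. -/

import Mathlib

/-! A nonzero `v` in the closed forward cone pairs positively with every `w` in the open one by
the reverse Cauchy–Schwarz inequality `(∑ vᵢwᵢ)² ≤ |v⃗|²|w⃗|² < (v₀w₀)²`. Conversely, pairing with
`e₀ = (1, 0)` forces `v₀ > 0`, and if `v` were spacelike then `w = (|v⃗|²/v₀, v⃗)` would be a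
timelike future vector orthogonal to `v`. -/

/-- The rational Minkowski form of signature (1,n). -/
def qform (n : ℕ) (x y : Fin (n+1) → ℚ) : ℚ :=
  x 0 * y 0 - ∑ i : Fin n, x i.succ * y i.succ

/-- The rational points of the forward component of the positive cone. -/
def FPQ (n : ℕ) : Set (Fin (n+1) → ℚ) := {x | 0 < qform n x x ∧ 0 < x 0}

section

open Finset

variable {n : ℕ}

lemma qform_comm (x y : Fin (n+1) → ℚ) : qform n x y = qform n y x := by
  simp only [qform, mul_comm]

lemma qform_self (x : Fin (n+1) → ℚ) : qform n x x = x 0 ^ 2 - ∑ i : Fin n, x i.succ ^ 2 := by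
  simp only [qform, sq]

lemma qform_cons (a : ℚ) (x : Fin n → ℚ) (y : Fin (n+1) → ℚ) :
    qform n (Fin.cons a x) y = a * y 0 - ∑ i : Fin n, x i * y i.succ := by
  simp only [qform, Fin.cons_zero, Fin.cons_succ]

lemma single_zero_mem_FPQ : (Pi.single 0 1 : Fin (n+1) → ℚ) ∈ FPQ n := by
  simp [FPQ, qform, Fin.succ_ne_zero]

lemma qform_single_zero (v : Fin (n+1) → ℚ) : qform n v (Pi.single 0 1) = v 0 := by
  simp [qform, Fin.succ_ne_zero]

lemma eq_zero_of_qform_self_nonneg_of_apply_zero {v : Fin (n+1) → ℚ}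
    (hq : 0 ≤ qform n v v) (hv0 : v 0 = 0) : v = 0 := by
  rw [qform_self, hv0] at hq
  have hsum : ∑ i : Fin n, v i.succ ^ 2 = 0 :=
    le_antisymm (by linarith) (sum_nonneg fun i _ => sq_nonneg _)
  have hsucc : ∀ i : Fin n, v i.succ = 0 := fun i =>
    pow_eq_zero_iff two_ne_zero |>.mp <|
      (sum_eq_zero_iff_of_nonneg fun i _ => sq_nonneg _).mp hsum i (mem_univ i)
  funext j
  exact Fin.cases hv0 hsucc j

lemma qform_pos_of_mem_FPQ {v w : Fin (n+1) → ℚ}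
    (hq : 0 ≤ qform n v v) (hv0 : 0 < v 0) (hw : w ∈ FPQ n) : 0 < qform n v w := by
  obtain ⟨hww, hw0⟩ := hw
  rw [qform_self] at hq hww
  have hSw : 0 ≤ ∑ i : Fin n, w i.succ ^ 2 := sum_nonneg fun i _ => sq_nonneg _
  have hsq : (∑ i : Fin n, v i.succ * w i.succ) ^ 2 < (v 0 * w 0) ^ 2 :=
    calc (∑ i : Fin n, v i.succ * w i.succ) ^ 2
        ≤ (∑ i : Fin n, v i.succ ^ 2) * ∑ i : Fin n, w i.succ ^ 2 :=
          sum_mul_sq_le_sq_mul_sq _ _ _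
      _ ≤ v 0 ^ 2 * ∑ i : Fin n, w i.succ ^ 2 := by gcongr; linarith
      _ < v 0 ^ 2 * w 0 ^ 2 := by gcongr; linarith
      _ = (v 0 * w 0) ^ 2 := by ring
  have hlt := (abs_lt.mp (abs_lt_of_sq_lt_sq hsq (mul_pos hv0 hw0).le)).2
  simp only [qform]
  linarith

lemma exists_mem_FPQ_qform_eq_zero {v : Fin (n+1) → ℚ}
    (hv0 : 0 < v 0) (hq : qform n v v < 0) : ∃ w ∈ FPQ n, qform n v w = 0 := by
  set S := ∑ i : Fin n, v i.succ ^ 2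
  have hS : v 0 < S / v 0 := by
    rw [lt_div_iff₀ hv0, ← sq]
    rw [qform_self] at hq
    linarith
  have hspatial : ∑ i : Fin n, Fin.tail v i * v i.succ = S := by
    simp only [Fin.tail, S, sq]
  refine ⟨Fin.cons (S / v 0) (Fin.tail v), ⟨?_, ?_⟩, ?_⟩
  · have hprod : v 0 * (S / v 0) = S := mul_div_cancel₀ _ hv0.ne'
    rw [qform_self, Fin.cons_zero]
    simp only [Fin.cons_succ, Fin.tail]
    nlinarith
  · rw [Fin.cons_zero]
    exact hv0.trans hS
  · rw [qform_comm, qform_cons, hspatial, div_mul_cancel₀ _ hv0.ne', sub_self]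

end

/-- Lemma 6.2, first step: the dual of FPℚ is the set of nonzero rational
points of the closure of FP. -/
theorem stmt11 (n : ℕ) :
    {v : Fin (n+1) → ℚ | ∀ w ∈ FPQ n, 0 < qform n v w} =
      {v : Fin (n+1) → ℚ | (0 ≤ qform n v v ∧ 0 ≤ v 0) ∧ v ≠ 0} := by
  ext v
  constructor
  · intro hdual
    have hv0 : 0 < v 0 := qform_single_zero v ▸ hdual _ single_zero_mem_FPQ
    refine ⟨⟨?_, hv0.le⟩, fun hv => hv0.ne' (by simp [hv])⟩
    by_contra! hq
    obtain ⟨w, hw, hvw⟩ := exists_mem_FPQ_qform_eq_zero hv0 hq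
    exact (hdual w hw).ne' hvw
  · rintro ⟨⟨hq, hv0_nonneg⟩, hv⟩ w hw
    have hv0 : 0 < v 0 :=
      hv0_nonneg.lt_of_ne fun h => hv (eq_zero_of_qform_self_nonneg_of_apply_zero hq h.symm)
    exact qform_pos_of_mem_FPQ hq hv0 hw
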